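/- arXiv:1304.7529 — 6 statements merged into one kernel-verified Lean document; each statement's English description precedes it below -/
import Mathlib

section
/- Let Φ: X ⊸ X be a bi-continuous multi-valued function on a topological space X (i.e., both Φ and Φ⁻¹ are lower and upper semicontinuous). Then the fixed fractal 𝔽(Φ) = closure(⋃_{n∈ω} Φⁿ(Fix(Φ))) satisfies Φ(𝔽(Φ)) = 𝔽(Φ). -/
open Set

/-- Image of a set under a multi-valued function (relation) `Φ ⊆ X × X`. -/
def mImage {X : Type*} (Φ : Set (X × X)) (A : Set X) : Set X := {y | ∃ x ∈ A, (x, y) ∈ Φ}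

/-- Iterates `Φⁿ(A)`. -/
def mIter {X : Type*} (Φ : Set (X × X)) : ℕ → Set X → Set X
  | 0, A => A
  | n + 1, A => mImage Φ (mIter Φ n A)

/-- Fixed points of a multi-valued function. -/
def mFix {X : Type*} (Φ : Set (X × X)) : Set X := {x | (x, x) ∈ Φ}

/-- The value `Φ(x)` of a multi-valued function at a point. -/
def mVal {X : Type*} (Φ : Set (X × X)) (x : X) : Set X := {y | (x, y) ∈ Φ}

/-- The inverse multi-valued function. -/
def mInv {X : Type*} (Φ : Set (X × X)) : Set (X × X) := {p | (p.2, p.1) ∈ Φ}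

/-
Lower semicontinuity of `Φ` gives `Φ(cl A) ⊆ cl Φ(A)`, and upper semicontinuity of `Φ⁻¹` makes
`Φ(cl A) = {y | Φ⁻¹(y) ∩ cl A ≠ ∅}` closed, so `cl Φ(A) ⊆ Φ(cl A)`: thus `Φ` commutes with
closure. The union `S` of the iterates of `Fix(Φ)` satisfies `S = Fix(Φ) ∪ Φ(S)`, and
`Fix(Φ) ⊆ Φ(Fix(Φ))`, so `Φ(S) = S` and hence `Φ(cl S) = cl Φ(S) = cl S`.
-/

section Algebra

variable {X : Type*} (Φ : Set (X × X))

theorem mFix_subset_mImage_mFix : mFix Φ ⊆ mImage Φ (mFix Φ) :=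
  fun x hx => ⟨x, hx, hx⟩

theorem mImage_iUnion_mIter (A : Set X) :
    mImage Φ (⋃ n, mIter Φ n A) = ⋃ n, mIter Φ (n + 1) A := by
  ext y
  simp only [mImage, mIter, mem_iUnion]
  exact ⟨fun ⟨x, ⟨n, hx⟩, hxy⟩ => ⟨n, x, hx, hxy⟩, fun ⟨n, x, hx, hxy⟩ => ⟨x, ⟨n, hx⟩, hxy⟩⟩

theorem mImage_iUnion_mIter_of_subset {A : Set X} (hA : A ⊆ mImage Φ A) :
    mImage Φ (⋃ n, mIter Φ n A) = ⋃ n, mIter Φ n A := by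
  rw [mImage_iUnion_mIter]
  refine Subset.antisymm (iUnion_subset fun n => subset_iUnion (mIter Φ · A) (n + 1)) ?_
  refine iUnion_subset fun n => ?_
  cases n with
  | zero => exact hA.trans (subset_iUnion (fun k => mIter Φ (k + 1) A) 0)
  | succ n => exact subset_iUnion (fun k => mIter Φ (k + 1) A) n

end Algebra

section Topology

variable {X : Type*} [TopologicalSpace X] (Φ : Set (X × X))

theorem mImage_closure_subset_closure_mImage
    (hlsc : ∀ U : Set X, IsOpen U → IsOpen {x | (mVal Φ x ∩ U).Nonempty}) (A : Set X) :
    mImage Φ (closure A) ⊆ closure (mImage Φ A) := by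
  rintro y ⟨x, hx, hxy⟩
  rw [mem_closure_iff] at hx ⊢
  intro V hV hyV
  obtain ⟨a, ⟨z, haz, hzV⟩, haA⟩ := hx _ (hlsc V hV) ⟨y, hxy, hyV⟩
  exact ⟨z, hzV, a, haA, haz⟩

theorem closure_mImage_subset_mImage_closure
    (husc' : ∀ F : Set X, IsClosed F → IsClosed {x | (mVal (mInv Φ) x ∩ F).Nonempty})
    (A : Set X) :
    closure (mImage Φ A) ⊆ mImage Φ (closure A) := by
  have hImage : mImage Φ (closure A) = {y | (mVal (mInv Φ) y ∩ closure A).Nonempty} := by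
    ext y
    exact ⟨fun ⟨x, hx, hxy⟩ => ⟨x, hxy, hx⟩, fun ⟨x, hxy, hx⟩ => ⟨x, hx, hxy⟩⟩
  rw [hImage]
  refine closure_minimal ?_ (husc' _ isClosed_closure)
  rintro y ⟨x, hx, hxy⟩
  exact ⟨x, hxy, subset_closure hx⟩

end Topology

theorem stmt3_general {X : Type*} [TopologicalSpace X] (Φ : Set (X × X))
    (hlsc : ∀ U : Set X, IsOpen U → IsOpen {x | (mVal Φ x ∩ U).Nonempty})
    (husc' : ∀ F : Set X, IsClosed F → IsClosed {x | (mVal (mInv Φ) x ∩ F).Nonempty}) :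
    mImage Φ (closure (⋃ n, mIter Φ n (mFix Φ))) = closure (⋃ n, mIter Φ n (mFix Φ)) := by
  set S := ⋃ n, mIter Φ n (mFix Φ)
  have hS : mImage Φ S = S := mImage_iUnion_mIter_of_subset Φ (mFix_subset_mImage_mFix Φ)
  refine Subset.antisymm ?_ ?_
  · calc mImage Φ (closure S) ⊆ closure (mImage Φ S) :=
          mImage_closure_subset_closure_mImage Φ hlsc S
      _ = closure S := by rw [hS]
  · calc closure S = closure (mImage Φ S) := by rw [hS]
      _ ⊆ mImage Φ (closure S) := closure_mImage_subset_mImage_closure Φ husc' S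

theorem stmt3 {X : Type*} [TopologicalSpace X] (Φ : Set (X × X))
    (hlsc : ∀ U : Set X, IsOpen U → IsOpen {x | (mVal Φ x ∩ U).Nonempty})
    (husc : ∀ F : Set X, IsClosed F → IsClosed {x | (mVal Φ x ∩ F).Nonempty})
    (hlsc' : ∀ U : Set X, IsOpen U → IsOpen {x | (mVal (mInv Φ) x ∩ U).Nonempty})
    (husc' : ∀ F : Set X, IsClosed F → IsClosed {x | (mVal (mInv Φ) x ∩ F).Nonempty}) :
    mImage Φ (closure (⋃ n, mIter Φ n (mFix Φ))) = closure (⋃ n, mIter Φ n (mFix Φ)) :=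
  stmt3_general Φ hlsc husc'
end

section
/- Let Φ: X ⊸ X be a contracting compact-valued multi-function on a complete metric space X with Lipschitz constant λ < 1. Then the set Fix(Φ) = {x : x ∈ Φ(x)} is nonempty, and moreover for every x₀ ∈ X one has d(x₀, Fix(Φ)) ≤ d(x₀, Φ(x₀))/(1−λ). -/
/-!
Iterate a nearest-point selection `x ↦ s x ∈ Φ x` starting from `x₀`. Since `s x ∈ Φ x`, the
Lipschitz bound on `Φ` gives `d(s x, Φ (s x)) ≤ λ · d(x, s x)`, so the steps of the orbit decay
geometrically with ratio `λ`, starting from `d(x₀, Φ x₀)`. The orbit is therefore Cauchy and its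
limit lies within `d(x₀, Φ x₀) / (1 - λ)` of `x₀`; it is a fixed point because `x ↦ d(x, Φ x)` is
continuous and equals the step length along the orbit, which tends to `0`.
-/

open Set

/-- Image of a set under a set-valued map `Φ : X → Set X`. -/
def sImage {X : Type*} (Φ : X → Set X) (A : Set X) : Set X := ⋃ a ∈ A, Φ a

/-- Iterates `Φⁿ(A)`. -/
def sIter {X : Type*} (Φ : X → Set X) : ℕ → Set X → Set X
  | 0, A => A
  | n + 1, A => sImage Φ (sIter Φ n A)

/-- Fixed points of a set-valued map. -/
def sFix {X : Type*} (Φ : X → Set X) : Set X := {x | x ∈ Φ x}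

open Metric Filter Topology

section PseudoMetric

variable {X : Type*} [PseudoMetricSpace X] {Φ : X → Set X} {lam : ℝ}

theorem infDist_self_le_infDist_self_add (hb : ∀ x, Bornology.IsBounded (Φ x))
    (hne : ∀ x, (Φ x).Nonempty) (hlip : ∀ x y, hausdorffDist (Φ x) (Φ y) ≤ lam * dist x y)
    (x y : X) : infDist x (Φ x) ≤ infDist y (Φ y) + (1 + lam) * dist x y :=
  calc infDist x (Φ x)
      ≤ infDist y (Φ x) + dist x y := infDist_le_infDist_add_dist
    _ ≤ infDist y (Φ y) + hausdorffDist (Φ y) (Φ x) + dist x y := by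
        gcongr
        exact infDist_le_infDist_add_hausdorffDist
          (hausdorffEDist_ne_top_of_nonempty_of_bounded (hne y) (hne x) (hb y) (hb x))
    _ ≤ infDist y (Φ y) + lam * dist x y + dist x y := by
        rw [hausdorffDist_comm]
        gcongr
        exact hlip x y
    _ = infDist y (Φ y) + (1 + lam) * dist x y := by ring

theorem continuous_infDist_self (hb : ∀ x, Bornology.IsBounded (Φ x))
    (hne : ∀ x, (Φ x).Nonempty) (hlip : ∀ x y, hausdorffDist (Φ x) (Φ y) ≤ lam * dist x y) :
    Continuous fun x => infDist x (Φ x) :=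
  (LipschitzWith.of_le_add_mul' _ (infDist_self_le_infDist_self_add hb hne hlip)).continuous

theorem infDist_self_le_of_mem (hb : ∀ x, Bornology.IsBounded (Φ x))
    (hne : ∀ x, (Φ x).Nonempty) (hlip : ∀ x y, hausdorffDist (Φ x) (Φ y) ≤ lam * dist x y)
    {x y : X} (hy : y ∈ Φ x) : infDist y (Φ y) ≤ lam * dist x y :=
  (infDist_le_hausdorffDist_of_mem hy
    (hausdorffEDist_ne_top_of_nonempty_of_bounded (hne x) (hne y) (hb x) (hb y))).trans (hlip x y)

theorem dist_iterate_succ_le_geometric (hb : ∀ x, Bornology.IsBounded (Φ x))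
    (hne : ∀ x, (Φ x).Nonempty) (hlip : ∀ x y, hausdorffDist (Φ x) (Φ y) ≤ lam * dist x y)
    (hlam0 : 0 ≤ lam) {s : X → X} (hs : ∀ x, s x ∈ Φ x)
    (hsd : ∀ x, infDist x (Φ x) = dist x (s x)) (x₀ : X) (n : ℕ) :
    dist (s^[n] x₀) (s^[n + 1] x₀) ≤ infDist x₀ (Φ x₀) * lam ^ n := by
  induction n with
  | zero => simp [hsd]
  | succ n ih =>
    rw [Function.iterate_succ_apply' s (n + 1), ← hsd, Function.iterate_succ_apply' s n]
    rw [Function.iterate_succ_apply'] at ih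
    calc infDist (s (s^[n] x₀)) (Φ (s (s^[n] x₀)))
        ≤ lam * dist (s^[n] x₀) (s (s^[n] x₀)) := infDist_self_le_of_mem hb hne hlip (hs _)
      _ ≤ lam * (infDist x₀ (Φ x₀) * lam ^ n) := by gcongr
      _ = infDist x₀ (Φ x₀) * lam ^ (n + 1) := by ring

theorem mem_sFix_of_tendsto_iterate (hcl : ∀ x, IsClosed (Φ x))
    (hb : ∀ x, Bornology.IsBounded (Φ x)) (hne : ∀ x, (Φ x).Nonempty)
    (hlip : ∀ x y, hausdorffDist (Φ x) (Φ y) ≤ lam * dist x y) {s : X → X}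
    (hsd : ∀ x, infDist x (Φ x) = dist x (s x)) {x₀ a : X}
    (ha : Tendsto (fun n => s^[n] x₀) atTop (𝓝 a)) : a ∈ sFix Φ := by
  have hstep : Tendsto (fun n => infDist (s^[n] x₀) (Φ (s^[n] x₀))) atTop (𝓝 0) := by
    simp_rw [hsd, ← Function.iterate_succ_apply' s]
    simpa using ha.dist (ha.comp (tendsto_add_atTop_nat 1))
  have hzero : infDist a (Φ a) = 0 :=
    tendsto_nhds_unique (((continuous_infDist_self hb hne hlip).tendsto a).comp ha) hstep
  exact ((hcl a).mem_iff_infDist_zero (hne a)).2 hzero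

end PseudoMetric

theorem exists_mem_sFix_dist_le {X : Type*} [MetricSpace X] [CompleteSpace X] {Φ : X → Set X}
    {lam : ℝ} (hc : ∀ x, IsCompact (Φ x)) (hne : ∀ x, (Φ x).Nonempty)
    (hlip : ∀ x y, hausdorffDist (Φ x) (Φ y) ≤ lam * dist x y) (hlam0 : 0 ≤ lam) (hlam : lam < 1)
    (x₀ : X) : ∃ a ∈ sFix Φ, dist x₀ a ≤ infDist x₀ (Φ x₀) / (1 - lam) := by
  have hb x := (hc x).isBounded
  choose s hs hsd using fun x => (hc x).exists_infDist_eq_dist (hne x) x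
  have hgeo := dist_iterate_succ_le_geometric hb hne hlip hlam0 hs hsd x₀
  obtain ⟨a, ha⟩ := cauchySeq_tendsto_of_complete (cauchySeq_of_le_geometric lam _ hlam hgeo)
  exact ⟨a, mem_sFix_of_tendsto_iterate (fun x => (hc x).isClosed) hb hne hlip hsd ha,
    dist_le_of_le_geometric_of_tendsto₀ lam _ hlam hgeo ha⟩

theorem stmt7 {X : Type*} [MetricSpace X] [CompleteSpace X] [Nonempty X]
    (Φ : X → Set X) (lam : ℝ) (hlam0 : 0 ≤ lam) (hlam : lam < 1)
    (hc : ∀ x, IsCompact (Φ x)) (hne : ∀ x, (Φ x).Nonempty)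
    (hlip : ∀ x y, Metric.hausdorffDist (Φ x) (Φ y) ≤ lam * dist x y) :
    (sFix Φ).Nonempty ∧
      ∀ x₀ : X, Metric.infDist x₀ (sFix Φ) ≤ Metric.infDist x₀ (Φ x₀) / (1 - lam) := by
  refine ⟨?_, fun x₀ => ?_⟩
  · obtain ⟨a, ha, -⟩ := exists_mem_sFix_dist_le hc hne hlip hlam0 hlam (Classical.arbitrary X)
    exact ⟨a, ha⟩
  · obtain ⟨a, ha, hdist⟩ := exists_mem_sFix_dist_le hc hne hlip hlam0 hlam x₀
    exact (infDist_le_dist_of_mem ha).trans hdist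
end

section
/- Let Φ: X ⊸ X be a contracting finite-valued multi-function on a complete metric space X with Lipschitz constant λ < 1 (with respect to the Hausdorff distance). Then the set Fix(Φ) = {x : x ∈ Φ(x)} is finite. -/
/-!
A fixed point `x` lies in `Φ x`, so it is within `λ · d(x, y)` of `Φ y` for every `y`.
Hence for fixed points `x, y` there is `z ∈ Φ x` with `d(y, z) ≤ λ · d(y, x)` and
`d(x, z) ≤ (1 + λ) · d(x, y)`; when `y` is close to `x`, finiteness of `Φ x` forces `z = x`,
and then `d(x, y) ≤ λ · d(x, y)` gives `y = x`: fixed points are isolated. Iterating the same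
estimate, every fixed point is within `λⁿ · d(x, x₀)` of the finite set `Φⁿ{x₀}`, and fixed
points lie in a bounded set, so `Fix Φ` is totally bounded; it is closed, hence compact, and
compact discrete sets are finite.
-/

open Set

open Metric

section Iterates

variable {X : Type*} {Φ : X → Set X}

lemma subset_sImage {A : Set X} {a : X} (ha : a ∈ A) : Φ a ⊆ sImage Φ A :=
  fun _ hb => mem_biUnion ha hb

lemma sIter_finite (hf : ∀ x, (Φ x).Finite) {A : Set X} (hA : A.Finite) :
    ∀ n, (sIter Φ n A).Finite
  | 0 => hA
  | n + 1 => (sIter_finite hf hA n).biUnion fun a _ => hf a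

lemma sIter_nonempty (hne : ∀ x, (Φ x).Nonempty) {A : Set X} (hA : A.Nonempty) :
    ∀ n, (sIter Φ n A).Nonempty
  | 0 => hA
  | n + 1 =>
    have ⟨a, ha⟩ := sIter_nonempty hne hA n
    (hne a).mono (subset_sImage ha)

end Iterates

structure IsFiniteValuedLipschitz {X : Type*} [MetricSpace X] (Φ : X → Set X) (lam : ℝ) :
    Prop where
  finite : ∀ x, (Φ x).Finite
  nonempty : ∀ x, (Φ x).Nonempty
  hausdorffDist_le : ∀ x y, hausdorffDist (Φ x) (Φ y) ≤ lam * dist x y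

namespace IsFiniteValuedLipschitz

variable {X : Type*} [MetricSpace X] {Φ : X → Set X} {lam : ℝ} {x : X}

lemma hausdorffEDist_ne_top (h : IsFiniteValuedLipschitz Φ lam) (x y : X) :
    hausdorffEDist (Φ x) (Φ y) ≠ ⊤ :=
  hausdorffEDist_ne_top_of_nonempty_of_bounded (h.nonempty x) (h.nonempty y)
    (h.finite x).isBounded (h.finite y).isBounded

lemma infDist_le_of_mem_sFix (h : IsFiniteValuedLipschitz Φ lam) (hx : x ∈ sFix Φ) (y : X) :
    infDist x (Φ y) ≤ lam * dist x y :=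
  (infDist_le_hausdorffDist_of_mem (s := Φ x) hx (h.hausdorffEDist_ne_top x y)).trans
    (h.hausdorffDist_le x y)

lemma lipschitzWith_infDist_self (h : IsFiniteValuedLipschitz Φ lam) :
    LipschitzWith (1 + lam).toNNReal fun x => infDist x (Φ x) := by
  refine LipschitzWith.of_le_add_mul' (1 + lam) fun x y => ?_
  calc infDist x (Φ x) ≤ infDist x (Φ y) + hausdorffDist (Φ y) (Φ x) :=
        infDist_le_infDist_add_hausdorffDist (h.hausdorffEDist_ne_top y x)
    _ ≤ (infDist y (Φ y) + dist x y) + lam * dist x y := by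
        gcongr
        · exact infDist_le_infDist_add_dist
        · simpa only [dist_comm] using h.hausdorffDist_le y x
    _ = infDist y (Φ y) + (1 + lam) * dist x y := by ring

lemma isClosed_sFix (h : IsFiniteValuedLipschitz Φ lam) : IsClosed (sFix Φ) := by
  have hF : sFix Φ = {x | infDist x (Φ x) = 0} := by
    ext x
    exact (h.finite x).isClosed.mem_iff_infDist_zero (h.nonempty x)
  rw [hF]
  exact isClosed_eq h.lipschitzWith_infDist_self.continuous continuous_const

lemma exists_ball_inter_sFix_eq_singleton (h : IsFiniteValuedLipschitz Φ lam) (hlam : lam < 1)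
    (hx : x ∈ sFix Φ) : ∃ ε > 0, ball x ε ∩ sFix Φ = {x} := by
  obtain ⟨r, hr, hball⟩ :=
    exists_ball_inter_eq_singleton_of_mem_discrete (h.finite x).isDiscrete hx
  refine ⟨r / 2, half_pos hr, subset_antisymm ?_ (by simpa [hr] using hx)⟩
  rintro y ⟨hy, hyF⟩
  rw [mem_ball] at hy
  obtain ⟨z, hz, hyz⟩ := (h.finite x).isCompact.exists_infDist_eq_dist (h.nonempty x) y
  have hyz' : dist y z ≤ lam * dist y x := hyz ▸ h.infDist_le_of_mem_sFix hyF x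
  -- `d(z, x) ≤ d(y, x) + λ d(y, x) < r`, and `x` is the only point of `Φ x` in `ball x r`.
  have hzx : z = x := by
    have hxz : dist z x < r := by
      nlinarith [dist_triangle z y x, dist_comm y z, dist_nonneg (x := y) (y := x)]
    have hz' : z ∈ ball x r ∩ Φ x := ⟨hxz, hz⟩
    rwa [hball] at hz'
  subst hzx
  have : dist y z = 0 := by nlinarith [dist_nonneg (x := y) (y := z)]
  simpa using dist_eq_zero.mp this

lemma isDiscrete_sFix (h : IsFiniteValuedLipschitz Φ lam) (hlam : lam < 1) :
    IsDiscrete (sFix Φ) :=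
  isDiscrete_iff_forall_mem_exists_isOpen.mpr fun _ hx =>
    have ⟨_, _, hball⟩ := h.exists_ball_inter_sFix_eq_singleton hlam hx
    ⟨_, isOpen_ball, hball⟩

lemma infDist_sImage_le (h : IsFiniteValuedLipschitz Φ lam) (hx : x ∈ sFix Φ) {A : Set X}
    (hA : IsCompact A) (hA' : A.Nonempty) : infDist x (sImage Φ A) ≤ lam * infDist x A := by
  obtain ⟨a, ha, hxa⟩ := hA.exists_infDist_eq_dist hA' x
  calc infDist x (sImage Φ A) ≤ infDist x (Φ a) :=
        infDist_le_infDist_of_subset (subset_sImage ha) (h.nonempty a)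
    _ ≤ lam * infDist x A := hxa ▸ h.infDist_le_of_mem_sFix hx a

lemma infDist_sIter_le (h : IsFiniteValuedLipschitz Φ lam) (hlam0 : 0 ≤ lam)
    (hx : x ∈ sFix Φ) {A : Set X} (hA : A.Finite) (hA' : A.Nonempty) :
    ∀ n, infDist x (sIter Φ n A) ≤ lam ^ n * infDist x A
  | 0 => by simp [sIter]
  | n + 1 =>
    calc infDist x (sIter Φ (n + 1) A) ≤ lam * infDist x (sIter Φ n A) :=
          h.infDist_sImage_le hx (sIter_finite h.finite hA n).isCompact
            (sIter_nonempty h.nonempty hA' n)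
      _ ≤ lam * (lam ^ n * infDist x A) := by
          gcongr
          exact h.infDist_sIter_le hlam0 hx hA hA' n
      _ = lam ^ (n + 1) * infDist x A := by ring

lemma dist_le_of_mem_sFix (h : IsFiniteValuedLipschitz Φ lam) (hlam : lam < 1) {x₀ : X}
    (hx : x ∈ sFix Φ) (hx₀ : x₀ ∈ sFix Φ) : dist x x₀ ≤ diam (Φ x₀) / (1 - lam) := by
  rw [le_div_iff₀ (by linarith)]
  have := dist_le_infDist_add_diam (x := x) (h.finite x₀).isBounded hx₀
  linarith [h.infDist_le_of_mem_sFix hx x₀]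

lemma totallyBounded_sFix (h : IsFiniteValuedLipschitz Φ lam) (hlam0 : 0 ≤ lam)
    (hlam : lam < 1) : TotallyBounded (sFix Φ) := by
  rcases (sFix Φ).eq_empty_or_nonempty with hF | ⟨x₀, hx₀⟩
  · simp [hF]
  set R := diam (Φ x₀) / (1 - lam)
  have hR : 0 ≤ R := div_nonneg diam_nonneg (by linarith)
  rw [totallyBounded_iff]
  intro ε hε
  obtain ⟨n, hn⟩ := exists_pow_lt_of_lt_one (div_pos hε (by linarith : 0 < R + 1)) hlam
  rw [lt_div_iff₀ (by linarith)] at hn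
  refine ⟨sIter Φ n {x₀}, sIter_finite h.finite (finite_singleton x₀) n, fun x hx => ?_⟩
  have hxn : infDist x (sIter Φ n {x₀}) < ε :=
    calc infDist x (sIter Φ n {x₀}) ≤ lam ^ n * dist x x₀ := by
          simpa using
            h.infDist_sIter_le hlam0 hx (finite_singleton x₀) (singleton_nonempty x₀) n
      _ ≤ lam ^ n * (R + 1) := by
          gcongr
          linarith [h.dist_le_of_mem_sFix hlam hx hx₀]
      _ < ε := hn
  obtain ⟨y, hy, hxy⟩ :=
    (infDist_lt_iff (sIter_nonempty h.nonempty (singleton_nonempty x₀) n)).mp hxn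
  exact mem_biUnion hy hxy

lemma isCompact_sFix [CompleteSpace X] (h : IsFiniteValuedLipschitz Φ lam) (hlam0 : 0 ≤ lam)
    (hlam : lam < 1) : IsCompact (sFix Φ) :=
  (h.totallyBounded_sFix hlam0 hlam).isCompact_of_isClosed h.isClosed_sFix

end IsFiniteValuedLipschitz

theorem stmt8 {X : Type*} [MetricSpace X] [CompleteSpace X]
    (Φ : X → Set X) (lam : ℝ) (hlam0 : 0 ≤ lam) (hlam : lam < 1)
    (hf : ∀ x, (Φ x).Finite) (hne : ∀ x, (Φ x).Nonempty)
    (hlip : ∀ x y, Metric.hausdorffDist (Φ x) (Φ y) ≤ lam * dist x y) :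
    (sFix Φ).Finite := by
  have h : IsFiniteValuedLipschitz Φ lam := ⟨hf, hne, hlip⟩
  exact (h.isCompact_sFix hlam0 hlam).finite (h.isDiscrete_sFix hlam)
end

section
/- Let Φ: X ⊸ X be a finite-valued multi-function on a T₁ topological space X such that Fix(Φ) is finite. If the family {Φⁿ⁺¹(Fix(Φ)) \ Φⁿ(Fix(Φ))}_{n∈ω} is locally finite in X, then the fixed fractal 𝔽(Φ) = closure(⋃_n Φⁿ(Fix(Φ))) equals the orbit ⋃_n Φⁿ(Fix(Φ)) and is a closed discrete subspace of X. -/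
open Set

/-!
The orbit is `Fix(Φ)` together with the union of the differences `Φⁿ⁺¹(Fix Φ) \ Φⁿ(Fix Φ)`, so it
is the union of a locally finite family of finite sets. In a T₁-space every subset `t` of such a
union is the union of the locally finite family of finite, hence closed, sets `t ∩ fᵢ`, so it is
closed. Taking `t` to be the whole union gives closedness, and all subsets being closed gives
discreteness.
-/

theorem Set.iUnion_eq_zero_union_iUnion_succ_sdiff {α : Type*} (s : ℕ → Set α) :
    ⋃ n, s n = s 0 ∪ ⋃ n, (s (n + 1) \ s n) := by
  refine Subset.antisymm (iUnion_subset fun n => ?_)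
    (union_subset (subset_iUnion s 0) (iUnion_mono' fun n => ⟨n + 1, sdiff_subset⟩))
  induction n with
  | zero => exact subset_union_left
  | succ n ih =>
    intro x hx
    by_cases hxn : x ∈ s n
    · exact ih hxn
    · exact Or.inr (mem_iUnion.2 ⟨n, hx, hxn⟩)

section LocallyFinite

variable {ι X : Type*} [TopologicalSpace X] [T1Space X] {f : ι → Set X}

theorem LocallyFinite.isClosed_of_subset_iUnion_of_finite (hf : LocallyFinite f)
    (hfin : ∀ i, (f i).Finite) {t : Set X} (ht : t ⊆ ⋃ i, f i) : IsClosed t := by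
  rw [← inter_eq_left.2 ht, inter_iUnion]
  exact (hf.subset fun i => inter_subset_right).isClosed_iUnion fun i =>
    ((hfin i).subset inter_subset_right).isClosed

theorem LocallyFinite.isDiscrete_iUnion_of_finite (hf : LocallyFinite f)
    (hfin : ∀ i, (f i).Finite) : IsDiscrete (⋃ i, f i) :=
  isDiscrete_iff_forall_mem_exists_isClosed.2 fun _ ht =>
    ⟨_, hf.isClosed_of_subset_iUnion_of_finite hfin ht, inter_eq_left.2 ht⟩

end LocallyFinite

section MultiFunction

variable {X : Type*} (Φ : Set (X × X))

theorem mImage_eq_biUnion (A : Set X) : mImage Φ A = ⋃ x ∈ A, mVal Φ x := by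
  ext y
  simp [mImage, mVal]

variable {Φ}

theorem mIter_finite (hf : ∀ x, (mVal Φ x).Finite) {A : Set X} (hA : A.Finite) (n : ℕ) :
    (mIter Φ n A).Finite := by
  induction n with
  | zero => exact hA
  | succ n ih =>
    rw [mIter, mImage_eq_biUnion]
    exact ih.biUnion fun x _ => hf x

end MultiFunction

theorem stmt12_general {X : Type*} [TopologicalSpace X] [T1Space X] (Φ : Set (X × X))
    (hf : ∀ x, (mVal Φ x).Finite)
    (hFixfin : (mFix Φ).Finite)
    (hlf : LocallyFinite fun n : ℕ => mIter Φ (n + 1) (mFix Φ) \ mIter Φ n (mFix Φ)) :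
    closure (⋃ n, mIter Φ n (mFix Φ)) = ⋃ n, mIter Φ n (mFix Φ) ∧
    IsClosed (⋃ n, mIter Φ n (mFix Φ)) ∧
    DiscreteTopology ↥(⋃ n, mIter Φ n (mFix Φ)) := by
  set pieces : Option ℕ → Set X :=
    Option.elim' (mFix Φ) fun n => mIter Φ (n + 1) (mFix Φ) \ mIter Φ n (mFix Φ)
  have horbit : ⋃ n, mIter Φ n (mFix Φ) = ⋃ o, pieces o := by
    rw [iUnion_eq_zero_union_iUnion_succ_sdiff, iUnion_option]
    rfl
  have hpieces : LocallyFinite pieces := hlf.option_elim' _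
  have hfin : ∀ o, (pieces o).Finite
    | none => hFixfin
    | some n => (mIter_finite hf hFixfin (n + 1)).subset sdiff_subset
  have hclosed : IsClosed (⋃ n, mIter Φ n (mFix Φ)) :=
    hpieces.isClosed_of_subset_iUnion_of_finite hfin horbit.subset
  exact ⟨hclosed.closure_eq, hclosed, (horbit ▸ hpieces.isDiscrete_iUnion_of_finite hfin).to_subtype⟩

theorem stmt12 {X : Type*} [TopologicalSpace X] [T1Space X] (Φ : Set (X × X))
    (hf : ∀ x, (mVal Φ x).Finite) (hne : ∀ x, (mVal Φ x).Nonempty)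
    (hFixfin : (mFix Φ).Finite)
    (hlf : LocallyFinite fun n : ℕ => mIter Φ (n + 1) (mFix Φ) \ mIter Φ n (mFix Φ)) :
    closure (⋃ n, mIter Φ n (mFix Φ)) = ⋃ n, mIter Φ n (mFix Φ) ∧
    IsClosed (⋃ n, mIter Φ n (mFix Φ)) ∧
    DiscreteTopology ↥(⋃ n, mIter Φ n (mFix Φ)) :=
  stmt12_general Φ hf hFixfin hlf
end

section
/- Let Φ: X ⊸ X be a multi-valued function on a topological space X such that every set Φⁿ(Fix(Φ)) is closed in X and the family {Φⁿ⁺¹(Fix(Φ)) \ Φⁿ(Fix(Φ))}_{n∈ω} is locally finite. Then for any compact E ⊆ X there is n ∈ ω such that E ∩ 𝔽(Φ) = E ∩ Φⁿ(Fix(Φ)), where 𝔽(Φ) = closure(⋃_m Φᵐ(Fix(Φ))). -/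
open Set

/- Only finitely many layers `Φⁿ⁺¹(Fix Φ) \ Φⁿ(Fix Φ)` meet a neighbourhood of a point, or a compact
set; on such a set the increasing union `⋃ₙ Φⁿ(Fix Φ)` therefore agrees with a single closed stage
`Φᴺ(Fix Φ)`. Applied to neighbourhoods this shows the union is closed, so `𝔽(Φ)` is the union
itself; applied to the compact `E` it gives the theorem. -/

lemma mImage_mono {X : Type*} (Φ : Set (X × X)) {A B : Set X} (h : A ⊆ B) :
    mImage Φ A ⊆ mImage Φ B :=
  fun _ ⟨x, hx, hxy⟩ => ⟨x, h hx, hxy⟩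

lemma mFix_subset_mImage {X : Type*} (Φ : Set (X × X)) : mFix Φ ⊆ mImage Φ (mFix Φ) :=
  fun x hx => ⟨x, hx, hx⟩

lemma monotone_mIter {X : Type*} (Φ : Set (X × X)) {A : Set X} (hA : A ⊆ mImage Φ A) :
    Monotone fun n => mIter Φ n A := by
  refine monotone_nat_of_le_succ fun n => ?_
  induction n with
  | zero => exact hA
  | succ n ih => exact mImage_mono Φ ih

namespace Monotone

variable {X : Type*} {S : ℕ → Set X}

lemma exists_inter_iUnion_eq (hS : Monotone S) {T : Set X}
    (hT : {n | ((S (n + 1) \ S n) ∩ T).Nonempty}.Finite) :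
    ∃ N, T ∩ ⋃ m, S m = T ∩ S N := by
  obtain ⟨b, hb⟩ := hT.bddAbove
  have hstable : ∀ m, b + 1 ≤ m → T ∩ S m ⊆ S (b + 1) := by
    intro m hm
    induction m, hm using Nat.le_induction with
    | base => exact inter_subset_right
    | succ m hm ih =>
      rintro x ⟨hxT, hxS⟩
      by_cases hxm : x ∈ S m
      · exact ih ⟨hxT, hxm⟩
      · have : m ≤ b := hb ⟨x, ⟨hxS, hxm⟩, hxT⟩
        omega
  refine ⟨b + 1, Subset.antisymm ?_ (inter_subset_inter_right _ (subset_iUnion S _))⟩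
  rintro x ⟨hxT, hxU⟩
  obtain ⟨m, hxm⟩ := mem_iUnion.1 hxU
  exact ⟨hxT, hstable (max m (b + 1)) (le_max_right _ _) ⟨hxT, hS (le_max_left _ _) hxm⟩⟩

variable [TopologicalSpace X]

lemma isClosed_iUnion_of_locallyFinite_diff (hS : Monotone S) (hcl : ∀ n, IsClosed (S n))
    (hlf : LocallyFinite fun n => S (n + 1) \ S n) : IsClosed (⋃ n, S n) := by
  refine isClosed_of_closure_subset fun x hx => ?_
  obtain ⟨t, ht, hfin⟩ := hlf x
  obtain ⟨N, hN⟩ := hS.exists_inter_iUnion_eq hfin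
  have hxN : x ∈ closure (S N) := mem_closure_iff_nhds.2 fun u hu => by
    have hne := mem_closure_iff_nhds.1 hx (u ∩ t) (Filter.inter_mem hu ht)
    rw [inter_assoc, hN] at hne
    exact hne.mono (inter_subset_inter_right _ inter_subset_right)
  exact mem_iUnion.2 ⟨N, (hcl N).closure_eq ▸ hxN⟩

end Monotone

theorem stmt13 {X : Type*} [TopologicalSpace X] (Φ : Set (X × X))
    (hcl : ∀ n : ℕ, IsClosed (mIter Φ n (mFix Φ)))
    (hlf : LocallyFinite fun n : ℕ => mIter Φ (n + 1) (mFix Φ) \ mIter Φ n (mFix Φ))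
    (E : Set X) (hE : IsCompact E) :
    ∃ n : ℕ, E ∩ closure (⋃ m, mIter Φ m (mFix Φ)) = E ∩ mIter Φ n (mFix Φ) := by
  have hS := monotone_mIter Φ (mFix_subset_mImage Φ)
  rw [(hS.isClosed_iUnion_of_locallyFinite_diff hcl hlf).closure_eq]
  exact hS.exists_inter_iUnion_eq (hlf.finite_nonempty_inter_compact hE)
end

section
/- Let Φ: ℝ ⊸ ℝ be given by Φ(x) = {3x, 3x−2}. Then for every n ∈ ω, Φⁿ({0}) = {−Σ_{i=0}^{n−1} 2xᵢ3ⁱ : (xᵢ) ∈ {0,1}ⁿ}, and consequently the orbit ⋃_{n∈ω} Φⁿ({0}) equals −M where M = {Σ_{k=0}^∞ 2xₖ3ᵏ : (xₖ) ∈ {0,1}^ω with only finitely many xₖ = 1} is the macro-Cantor set. -/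
/-!
Unfolding `Φ(A) = 3A ∪ (3A − 2)` once shows that an element of `Φⁿ⁺¹(A)` is `3y − 2b` with
`y ∈ Φⁿ(A)` and a bit `b`; so, by induction, the elements of `Φⁿ(A)` are exactly `3ⁿa − Σ 2xᵢ3ⁱ`
with `a ∈ A` and a bit string `x` of length `n`, the newest bit being the least significant digit.
For `A = {0}` these are the negated ternary numbers with `n` digits in `{0, 2}`, and a finite set
of exponents fits into some `{0, …, n − 1}`, so their union over `n` is `−M`.
-/

open Set

/-- The action of the multi-function `Φ : x ↦ {3x, 3x − 2}` on subsets of `ℝ`. -/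
def macroMap (A : Set ℝ) : Set ℝ := (fun x => 3 * x) '' A ∪ (fun x => 3 * x - 2) '' A

/-- Iterates of `macroMap`. -/
def macroIter : ℕ → Set ℝ → Set ℝ
  | 0, A => A
  | n + 1, A => macroMap (macroIter n A)

/-- The macro-Cantor set: all finite sums `Σ 2xₖ 3^k` with `xₖ ∈ {0,1}`. -/
def macroCantor : Set ℝ := {r | ∃ s : Finset ℕ, r = ∑ k ∈ s, 2 * (3 : ℝ) ^ k}

def cantorSum {n : ℕ} (x : Fin n → Bool) : ℝ :=
  ∑ i : Fin n, (if x i then (2 : ℝ) else 0) * 3 ^ (i : ℕ)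

lemma cantorSum_cons {n : ℕ} (b : Bool) (x : Fin n → Bool) :
    cantorSum (Fin.cons b x : Fin (n + 1) → Bool) = (if b then 2 else 0) + 3 * cantorSum x := by
  simp only [cantorSum, Fin.sum_univ_succ, Fin.cons_zero, Fin.cons_succ, Fin.val_zero,
    Fin.val_succ, pow_zero, mul_one, pow_succ, Finset.mul_sum]
  congr 1
  exact Finset.sum_congr rfl fun i _ => by ring

lemma cantorSum_eq_sum_finset {n : ℕ} (x : Fin n → Bool) :
    cantorSum x = ∑ k ∈ (Finset.univ.filter (x · = true)).map Fin.valEmbedding, 2 * (3 : ℝ) ^ k := by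
  simp [cantorSum, Finset.sum_map, Finset.sum_filter, ite_mul]

lemma sum_finset_eq_cantorSum {n : ℕ} {s : Finset ℕ} (hs : s ⊆ Finset.range n) :
    ∑ k ∈ s, 2 * (3 : ℝ) ^ k = cantorSum (fun i : Fin n => decide ((i : ℕ) ∈ s)) := by
  simp only [cantorSum, decide_eq_true_eq, ite_mul, zero_mul]
  rw [Fin.sum_univ_eq_sum_range (fun k => if k ∈ s then 2 * (3 : ℝ) ^ k else 0),
    Finset.sum_ite_mem, Finset.inter_eq_right.mpr hs]

lemma macroCantor_eq_iUnion_range_cantorSum :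
    macroCantor = ⋃ n, range (cantorSum (n := n)) := by
  ext r
  simp only [macroCantor, mem_iUnion, mem_range, mem_ofPred_eq]
  constructor
  · rintro ⟨s, rfl⟩
    exact ⟨_, _, (sum_finset_eq_cantorSum s.subset_range_sup_succ).symm⟩
  · rintro ⟨n, x, rfl⟩
    exact ⟨_, cantorSum_eq_sum_finset x⟩

lemma mem_macroMap {A : Set ℝ} {r : ℝ} :
    r ∈ macroMap A ↔ ∃ a ∈ A, ∃ b : Bool, r = 3 * a - (if b then 2 else 0) := by
  simp only [macroMap, mem_union, mem_image, Bool.exists_bool, Bool.false_eq_true, if_false,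
    if_true, sub_zero, and_or_left, exists_or, eq_comm]

lemma macroIter_eq (n : ℕ) (A : Set ℝ) :
    macroIter n A = {r | ∃ a ∈ A, ∃ x : Fin n → Bool, r = 3 ^ n * a - cantorSum x} := by
  induction n with
  | zero => ext r; simp [macroIter, cantorSum]
  | succ n ih =>
    ext r
    simp only [macroIter, mem_macroMap, ih, mem_ofPred_eq]
    constructor
    · rintro ⟨_, ⟨a, ha, x, rfl⟩, b, rfl⟩
      exact ⟨a, ha, Fin.cons b x, by rw [cantorSum_cons]; ring⟩
    · rintro ⟨a, ha, x, rfl⟩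
      refine ⟨_, ⟨a, ha, Fin.tail x, rfl⟩, x 0, ?_⟩
      rw [← Fin.cons_self_tail x, cantorSum_cons]
      simp only [Fin.cons_zero, Fin.tail_cons]
      ring

lemma macroIter_singleton_zero (n : ℕ) :
    macroIter n {0} = Neg.neg '' range (cantorSum (n := n)) := by
  ext r
  simp only [macroIter_eq, mem_singleton_iff, mul_zero, zero_sub, exists_eq_left, mem_image,
    mem_range, exists_exists_eq_and, mem_ofPred_eq]
  exact exists_congr fun x => by rw [eq_comm, neg_eq_iff_eq_neg]

theorem stmt15 :
    (∀ n : ℕ, macroIter n {0} =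
      {r : ℝ | ∃ x : Fin n → Bool,
        r = -∑ i : Fin n, (if x i then (2 : ℝ) else 0) * 3 ^ (i : ℕ)}) ∧
    (⋃ n, macroIter n {0}) = Neg.neg '' macroCantor := by
  refine ⟨fun n => ?_, ?_⟩
  · simp [macroIter_eq, cantorSum]
  · simp only [macroIter_singleton_zero, macroCantor_eq_iUnion_range_cantorSum, image_iUnion]
end
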